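/- The function K(x) = x / tan(x/2) on the torus (extended smoothly at 0) is C^∞ on (−π, π), and for any distribution a in H^q(T), the convolution K*a is a smooth function; in particular if a is an H^q-atom then ‖K*a‖_{L^∞(T)} ≤ C with C independent of the atom. -/

import Mathlib

open MeasureTheory Real Topology

/-- The kernel `K(x) = x / tan(x/2)`, extended by continuity with `K(0) = 2`. -/
noncomputable def Kker (x : ℝ) : ℝ := if x = 0 then 2 else x / Real.tan (x / 2)

/-- An `H^q(𝕋)`-atom supported in the interval of center `x_I` and radius `r`. -/
def IsHqAtom (q x_I r : ℝ) (a : ℝ → ℝ) : Prop :=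
  Measurable a ∧ (∀ t, a t ≠ 0 → |t - x_I| ≤ r) ∧
  (∀ t, |a t| ≤ (2 * r) ^ (-(1 / q))) ∧
  (∀ k : ℕ, (k : ℝ) ≤ 1 / q - 1 → ∫ t in (x_I - r)..(x_I + r), a t * t ^ k = 0)

/-! ### Auxiliary lemmas -/

/-- The complex function `sin(z/2)/z`, extended by `1/2` at `0`. -/
noncomputable def Sc (z : ℂ) : ℂ := if z = 0 then 2⁻¹ else Complex.sin (z / 2) / z

lemma Sc_analyticAt (z : ℂ) : AnalyticAt ℂ Sc z := by
  rcases eq_or_ne z 0 with rfl | hz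
  · apply Complex.analyticAt_of_differentiable_on_punctured_nhds_of_continuousAt
    · filter_upwards [self_mem_nhdsWithin] with w hw
      have hopen : IsOpen {w : ℂ | w ≠ 0} := isOpen_ne
      have : DifferentiableAt ℂ (fun w => Complex.sin (w / 2) / w) w := by
        exact ((Complex.differentiable_sin.comp (differentiable_id.div_const 2)) w).div
          differentiableAt_id hw
      refine this.congr_of_eventuallyEq ?_
      filter_upwards [hopen.mem_nhds hw] with u hu
      simp [Sc, hu]
    · have h1 : Filter.Tendsto (fun z : ℂ => (2:ℂ)⁻¹ * slope Complex.sin 0 (z / 2)) (𝓝[≠] (0:ℂ))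
          (𝓝 (2⁻¹)) := by
        have hs : Filter.Tendsto (slope Complex.sin 0) (𝓝[≠] (0:ℂ)) (𝓝 1) := by
          have := hasDerivAt_iff_tendsto_slope.1 (Complex.hasDerivAt_sin 0)
          simpa using this
        have hmap : Filter.Tendsto (fun z : ℂ => z / 2) (𝓝[≠] (0:ℂ)) (𝓝[≠] (0:ℂ)) := by
          rw [tendsto_nhdsWithin_iff]
          constructor
          · simpa using ((continuous_id.div_const (2:ℂ)).tendsto 0).mono_left nhdsWithin_le_nhds
          filter_upwards [self_mem_nhdsWithin] with w hw
          exact div_ne_zero hw two_ne_zero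
        have := (hs.comp hmap).const_mul (2:ℂ)⁻¹
        simpa using this
      have h2 : ∀ᶠ z in 𝓝[≠] (0:ℂ), (2:ℂ)⁻¹ * slope Complex.sin 0 (z / 2) = Sc z := by
        filter_upwards [self_mem_nhdsWithin] with w hw
        have hw' : w ≠ 0 := hw
        simp only [Sc, if_neg hw', slope_def_field]
        field_simp
        simp only [Complex.sin_zero, sub_zero, mul_zero]
        exact mul_div_cancel_left₀ _ hw'
      have : Filter.Tendsto Sc (𝓝[≠] (0:ℂ)) (𝓝 (2⁻¹)) := h1.congr' h2
      rw [ContinuousAt]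
      have h0 : Sc 0 = 2⁻¹ := by simp [Sc]
      rw [h0, ← nhdsNE_sup_pure]
      refine this.sup ?_
      rw [Filter.tendsto_pure_left]
      intro s hs
      exact h0 ▸ mem_of_mem_nhds hs
  · rw [Complex.analyticAt_iff_eventually_differentiableAt]
    have hopen : IsOpen {w : ℂ | w ≠ 0} := isOpen_ne
    filter_upwards [hopen.mem_nhds hz] with w hw
    have : DifferentiableAt ℂ (fun w => Complex.sin (w / 2) / w) w :=
      ((Complex.differentiable_sin.comp (differentiable_id.div_const 2)) w).div
        differentiableAt_id hw
    refine this.congr_of_eventuallyEq ?_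
    filter_upwards [hopen.mem_nhds hw] with u hu
    simp [Sc, hu]

/-- The real function `sin(x/2)/x`, extended by `1/2` at `0`. -/
noncomputable def sfun (x : ℝ) : ℝ := if x = 0 then 2⁻¹ else Real.sin (x / 2) / x

lemma sfun_eq (x : ℝ) : sfun x = (Sc (x : ℂ)).re := by
  rcases eq_or_ne x 0 with rfl | hx
  · simp [sfun, Sc]
  · have hx' : (x : ℂ) ≠ 0 := Complex.ofReal_ne_zero.2 hx
    simp only [sfun, Sc, if_neg hx, if_neg hx']
    have : ((x : ℂ) / 2) = ((x / 2 : ℝ) : ℂ) := by push_cast; ring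
    rw [this, ← Complex.ofReal_sin, ← Complex.ofReal_div, Complex.ofReal_re]

lemma sfun_analyticAt (x : ℝ) : AnalyticAt ℝ sfun x := by
  have h2 : AnalyticAt ℝ (fun y : ℝ => Sc (y : ℂ)) x :=
    ((Sc_analyticAt x).restrictScalars).comp (Complex.ofRealCLM.analyticAt x)
  have h1 := (Complex.reCLM.analyticAt _).comp h2
  exact h1.congr (Filter.Eventually.of_forall fun y => (sfun_eq y).symm)

lemma cos_half_analyticAt (x : ℝ) : AnalyticAt ℝ (fun y : ℝ => Real.cos (y / 2)) x := by
  have hC : ∀ z : ℂ, AnalyticAt ℂ (fun w : ℂ => Complex.cos (w / 2)) z := by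
    intro z
    rw [Complex.analyticAt_iff_eventually_differentiableAt]
    exact Filter.Eventually.of_forall fun w =>
      (Complex.differentiable_cos.comp (differentiable_id.div_const 2)) w
  have h2 : AnalyticAt ℝ (fun y : ℝ => Complex.cos ((y : ℂ) / 2)) x :=
    ((hC x).restrictScalars).comp (Complex.ofRealCLM.analyticAt x)
  have h1 := (Complex.reCLM.analyticAt _).comp h2
  refine h1.congr (Filter.Eventually.of_forall fun y => ?_)
  have : ((y : ℂ) / 2) = ((y / 2 : ℝ) : ℂ) := by push_cast; ring
  simp only [Function.comp, this, ← Complex.ofReal_cos]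
  exact Complex.ofReal_re _

lemma Kker_eq (x : ℝ) : Kker x = Real.cos (x / 2) / sfun x := by
  rcases eq_or_ne x 0 with rfl | hx
  · norm_num [Kker, sfun]
  · simp only [Kker, sfun, if_neg hx, Real.tan_eq_sin_div_cos]
    rcases eq_or_ne (Real.sin (x / 2)) 0 with hs | hs
    · simp [hs]
    · rw [div_div_eq_mul_div, div_div_eq_mul_div, mul_comm]

lemma sfun_ne_zero {x : ℝ} (hx : x ∈ Set.Ioo (-(2*π)) (2*π)) : sfun x ≠ 0 := by
  rcases eq_or_ne x 0 with rfl | h0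
  · norm_num [sfun]
  · have hs : Real.sin (x / 2) ≠ 0 := by
      rcases lt_or_gt_of_ne h0 with hneg | hpos
      · have : Real.sin (-(x/2)) > 0 :=
          Real.sin_pos_of_pos_of_lt_pi (by linarith) (by nlinarith [hx.1, Real.pi_pos])
        simp only [Real.sin_neg] at this; linarith
      · have : Real.sin (x/2) > 0 :=
          Real.sin_pos_of_pos_of_lt_pi (by linarith) (by nlinarith [hx.2, Real.pi_pos])
        linarith
    simp [sfun, if_neg h0, div_ne_zero hs h0]

lemma Kker_analyticAt {x : ℝ} (hx : x ∈ Set.Ioo (-(2*π)) (2*π)) : AnalyticAt ℝ Kker x := by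
  have := (cos_half_analyticAt x).div (sfun_analyticAt x) (sfun_ne_zero hx)
  exact this.congr (Filter.Eventually.of_forall fun y => (Kker_eq y).symm)

lemma Kker_measurable : Measurable Kker := by
  have htan : Measurable Real.tan := by
    have : Real.tan = fun x => Real.sin x / Real.cos x := funext Real.tan_eq_sin_div_cos
    rw [this]
    exact Real.continuous_sin.measurable.div Real.continuous_cos.measurable
  unfold Kker
  refine Measurable.ite ?_ measurable_const ?_
  · exact (measurableSet_singleton 0 : MeasurableSet {x : ℝ | x = 0})
  · exact measurable_id.div (htan.comp (measurable_id.div_const 2))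

lemma II_of_bounded {g : ℝ → ℝ} (hm : Measurable g) {c : ℝ} (hb : ∀ t, |g t| ≤ c)
    (A B : ℝ) : IntervalIntegrable g volume A B := by
  rw [intervalIntegrable_iff]
  have hfin : IsFiniteMeasure (volume.restrict (Set.uIoc A B)) := by
    constructor
    rw [Measure.restrict_apply_univ, Set.uIoc]
    exact measure_Ioc_lt_top
  exact (integrable_const c).mono' hm.aestronglyMeasurable
    (Filter.Eventually.of_forall fun t => by simpa using hb t)

lemma moment_shift {a : ℝ → ℝ} (ha : Measurable a) {c : ℝ} (hab : ∀ t, |a t| ≤ c)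
    {A B : ℝ} {N : ℕ} (H : ∀ j : ℕ, j ≤ N → ∫ t in A..B, a t * t ^ j = 0)
    {k : ℕ} (hk : k ≤ N) : ∫ t in A..B, a t * (t - A) ^ k = 0 := by
  have haInt : IntervalIntegrable a volume A B := II_of_bounded ha hab A B
  have expand : ∀ t : ℝ, a t * (t - A) ^ k =
      ∑ j ∈ Finset.range (k + 1), (a t * t ^ j) * ((-A) ^ (k - j) * (k.choose j : ℝ)) := by
    intro t
    rw [sub_eq_add_neg, add_pow, Finset.mul_sum]
    congr 1 with j
    ring
  rw [intervalIntegral.integral_congr (g := fun t => ∑ j ∈ Finset.range (k + 1),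
      (a t * t ^ j) * ((-A) ^ (k - j) * (k.choose j : ℝ))) (fun t _ => expand t)]
  rw [intervalIntegral.integral_finset_sum]
  · apply Finset.sum_eq_zero
    intro j hj
    rw [intervalIntegral.integral_mul_const,
      H j (le_trans (Nat.lt_succ_iff.1 (Finset.mem_range.1 hj)) hk), zero_mul]
  · intro j hj
    exact (haInt.mul_continuousOn (continuous_pow j).continuousOn).mul_const _

lemma iteratedDerivWithin_eq_of_isOpen {f : ℝ → ℝ} {n : ℕ} {s u : Set ℝ}
    (hu : IsOpen u) (hsu : s ⊆ u) (hs : UniqueDiffOn ℝ s)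
    (hf : ContDiffOn ℝ n f u) {x : ℝ} (hx : x ∈ s) :
    iteratedDerivWithin n f s x = iteratedDeriv n f x := by
  have h1 : HasFTaylorSeriesUpToOn n f (ftaylorSeriesWithin ℝ f u) s :=
    (hf.ftaylorSeriesWithin hu.uniqueDiffOn).mono hsu
  have h2 := h1.eq_iteratedFDerivWithin_of_uniqueDiffOn (le_refl ((n:ℕ∞) : WithTop ℕ∞)) hs hx
  rw [iteratedDerivWithin_eq_iteratedFDerivWithin, iteratedDeriv_eq_iteratedFDeriv, ← h2]
  have : ftaylorSeriesWithin ℝ f u x n = iteratedFDerivWithin ℝ n f u x := rfl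
  rw [this, iteratedFDerivWithin_of_isOpen n hu (hsu hx)]

/-- **Smoothness of `K` and uniform boundedness of `K * a`.** The kernel `K(x) = x/tan(x/2)` is
`C^∞` on `(-π, π)`, and for every `0 < q ≤ 1` the convolution `K * a` with an `H^q`-atom `a`
is uniformly bounded, with a constant independent of the atom. -/
theorem Kker_smooth_and_conv_atom_bounded :
    ContDiffOn ℝ (⊤ : ℕ∞) Kker (Set.Ioo (-π) π) ∧
    ∀ q : ℝ, 0 < q → q ≤ 1 → ∃ C > 0, ∀ (a : ℝ → ℝ) (x_I r : ℝ), 0 < r → r < π / 4 →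
      IsHqAtom q x_I r a →
      ∀ x : ℝ, |x - x_I| ≤ π →
        |∫ t in (x_I - π)..(x_I + π), Kker (x - t) * a t| ≤ C := by
  have hπ := Real.pi_pos
  have hπ4 := Real.pi_le_four
  set U : Set ℝ := Set.Ioo (-(2*π)) (2*π) with hU
  have hUopen : IsOpen U := isOpen_Ioo
  set J : Set ℝ := Set.Icc (-(3*π/2)) (3*π/2) with hJ
  have hJU : J ⊆ U := fun y hy => ⟨by simp only [hJ, Set.mem_Icc] at hy; linarith [hy.1],
    by simp only [hJ, Set.mem_Icc] at hy; linarith [hy.2]⟩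
  constructor
  · intro x hx
    have hx' : x ∈ U := ⟨by linarith [hx.1], by linarith [hx.2]⟩
    exact ((Kker_analyticAt hx').contDiffAt).contDiffWithinAt
  · intro q hq0 hq1
    -- setup of degree
    set m : ℕ := ⌊1/q⌋₊ with hm
    have hq1' : (1:ℝ) ≤ 1/q := one_le_one_div hq0 hq1
    have hm1 : 1 ≤ m := Nat.le_floor (by exact_mod_cast hq1')
    set N : ℕ := m - 1 with hNdef
    have hN1 : N + 1 = m := Nat.succ_pred_eq_of_pos hm1
    have hmle : (m : ℝ) ≤ 1/q := Nat.floor_le (by positivity)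
    have hmlt : (1:ℝ)/q < m + 1 := Nat.lt_floor_add_one _
    -- smoothness of Kker on U, with bounds on derivatives on J
    have hKU : ∀ n : ℕ, ContDiffOn ℝ (n : WithTop ℕ∞) Kker U :=
      fun n y hy => ((Kker_analyticAt hy).contDiffAt).contDiffWithinAt
    have hcontU : ContinuousOn (iteratedDeriv (N+1) Kker) U := by
      have h1 : ContinuousOn (iteratedDerivWithin (N+1) Kker U) U :=
        (hKU (N+2)).continuousOn_iteratedDerivWithin (by exact_mod_cast Nat.le_succ (N+1))
          hUopen.uniqueDiffOn
      exact h1.congr fun y hy => (iteratedDerivWithin_eq_of_isOpen hUopen (le_refl _)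
        hUopen.uniqueDiffOn (hKU (N+1)) hy).symm
    obtain ⟨M₁, hM₁⟩ := isCompact_Icc.exists_bound_of_continuousOn (hcontU.mono hJU)
    set M : ℝ := max M₁ 0 with hMdef
    have hM0 : 0 ≤ M := le_max_right _ _
    have hMb : ∀ y ∈ J, |iteratedDeriv (N+1) Kker y| ≤ M :=
      fun y hy => le_trans (hM₁ y hy) (le_max_left _ _)
    have hKcont : ContinuousOn Kker U := fun y hy => ((Kker_analyticAt hy).continuousAt).continuousWithinAt
    obtain ⟨M₂, hM₂⟩ := isCompact_Icc.exists_bound_of_continuousOn (hKcont.mono hJU)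
    set M₀ : ℝ := max M₂ 0 with hM₀def
    have hM₀0 : 0 ≤ M₀ := le_max_right _ _
    have hM₀b : ∀ y ∈ J, |Kker y| ≤ M₀ := fun y hy => le_trans (hM₂ y hy) (le_max_left _ _)
    refine ⟨(M + 1) * 2 ^ (N + 2) / (N.factorial : ℝ), by positivity, ?_⟩
    intro a x_I r hr hrπ ⟨ham, hasupp, habd, hamom⟩ x hx
    set A : ℝ := x_I - r with hA
    set B : ℝ := x_I + r with hB
    set A' : ℝ := x_I - π with hA'
    set B' : ℝ := x_I + π with hB'
    have hAB : A < B := by simp only [hA, hB]; linarith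
    have hA'A : A' ≤ A := by simp only [hA, hA']; linarith
    have hBB' : B ≤ B' := by simp only [hB, hB']; linarith
    set u : ℝ := 2 * r with hu
    have hu0 : (0:ℝ) < u := by positivity
    have hu2 : u ≤ 2 := by simp only [hu]; linarith
    -- the function and its Taylor polynomial
    set f : ℝ → ℝ := fun t => Kker (x - t) with hf
    have hmemJ : ∀ t, |t - x_I| ≤ r → x - t ∈ J := by
      intro t ht
      have h1 : |x - t| ≤ π + r := by
        calc |x - t| ≤ |x - x_I| + |x_I - t| := abs_sub_le x x_I t
          _ ≤ π + r := add_le_add hx (by rwa [abs_sub_comm])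
      rw [abs_le] at h1
      exact ⟨by linarith [h1.1], by linarith [h1.2]⟩
    -- smoothness of f on an open set containing `Icc A B`
    set V : Set ℝ := (fun t : ℝ => x - t) ⁻¹' U with hV
    have hVopen : IsOpen V := hUopen.preimage (continuous_const.sub continuous_id)
    have hIccmem : ∀ t ∈ Set.Icc A B, |t - x_I| ≤ r := by
      intro t ht
      rw [abs_le]
      refine ⟨?_, ?_⟩
      · have := ht.1; simp only [hA] at this; linarith
      · have := ht.2; simp only [hB] at this; linarith
    have hIccV : Set.Icc A B ⊆ V := fun t ht => hJU (hmemJ t (hIccmem t ht))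
    have hfV : ∀ n : ℕ, ContDiffOn ℝ (n : WithTop ℕ∞) f V :=
      fun n => (hKU n).comp ((contDiff_const.sub contDiff_id).contDiffOn) (fun t ht => ht)
    have hfIcc : ContDiffOn ℝ ((N+1 : ℕ) : WithTop ℕ∞) f (Set.Icc A B) := (hfV (N+1)).mono hIccV
    -- bound on the (N+1)-st derivative
    have hderiv : ∀ y ∈ Set.Icc A B, ‖iteratedDerivWithin (N+1) f (Set.Icc A B) y‖ ≤ M := by
      intro y hy
      rw [iteratedDerivWithin_eq_of_isOpen hVopen hIccV (uniqueDiffOn_Icc hAB) (hfV (N+1)) hy]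
      have e1 : f = fun t => Kker (x + -t) := by
        funext t; simp only [hf, sub_eq_add_neg]
      have e2 := iteratedDeriv_comp_neg (N+1) (fun z => Kker (x + z)) y
      have e3 := congrFun (iteratedDeriv_comp_const_add (N+1) Kker x) (-y)
      rw [e1, e2, e3, norm_smul]
      simp only [norm_pow, norm_neg, norm_one, one_pow, one_mul]
      have hxy : x + -y = x - y := by ring
      rw [hxy, Real.norm_eq_abs]
      exact hMb _ (hmemJ y (hIccmem y hy))
    -- Taylor polynomial and remainder bound
    set P : ℝ → ℝ := fun t => taylorWithinEval f N (Set.Icc A B) A t with hP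
    have htay : ∀ t ∈ Set.Icc A B, |f t - P t| ≤ M * u ^ (N+1) / (N.factorial : ℝ) := by
      intro t ht
      have h1 := taylor_mean_remainder_bound hAB.le hfIcc ht hderiv
      rw [Real.norm_eq_abs] at h1
      refine le_trans h1 ?_
      gcongr
      · have := ht.1; simp only [hA] at this; linarith
      · have h2 := ht.2; simp only [hB] at h2; simp only [hu, hA]; linarith
    have hPcont : Continuous P := by
      have hPe : P = fun t => ∑ k ∈ Finset.range (N+1),
          (((k.factorial : ℝ))⁻¹ * (t - A)^k) • iteratedDerivWithin k f (Set.Icc A B) A :=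
        funext fun t => taylor_within_apply f N _ A t
      rw [hPe]
      apply continuous_finset_sum
      intro k _
      exact ((continuous_const.mul ((continuous_id.sub continuous_const).pow k)).smul
        continuous_const)
    -- vanishing moments against the Taylor polynomial
    have haInt : IntervalIntegrable a volume A B := II_of_bounded ham habd A B
    have hmomN : ∀ j : ℕ, j ≤ N → ∫ t in A..B, a t * t ^ j = 0 := by
      intro j hj
      apply hamom
      have hjN : (j:ℝ) ≤ (N:ℝ) := by exact_mod_cast hj
      have hNm : ((N:ℝ) + 1) = (m:ℝ) := by exact_mod_cast congrArg (Nat.cast (R := ℝ)) hN1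
      linarith [hmle]
    have hPzero : ∫ t in A..B, a t * P t = 0 := by
      have heq : ∀ t, a t * P t = ∑ k ∈ Finset.range (N+1), (a t * (t - A)^k) *
          (((k.factorial : ℝ))⁻¹ * iteratedDerivWithin k f (Set.Icc A B) A) := by
        intro t
        simp only [hP]
        rw [taylor_within_apply, Finset.mul_sum]
        refine Finset.sum_congr rfl fun k _ => ?_
        rw [smul_eq_mul]; ring
      rw [intervalIntegral.integral_congr (fun t _ => heq t)]
      rw [intervalIntegral.integral_finset_sum (fun k _ =>
        (haInt.mul_continuousOn (Continuous.continuousOn (by fun_prop))).mul_const _)]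
      refine Finset.sum_eq_zero fun k hk => ?_
      rw [intervalIntegral.integral_mul_const,
        moment_shift ham habd hmomN (Nat.lt_succ_iff.1 (Finset.mem_range.1 hk)), zero_mul]
    -- the integrand and restriction of the integral to the support
    set F : ℝ → ℝ := fun t => Kker (x - t) * a t with hFd
    have hFm : Measurable F := (Kker_measurable.comp (measurable_const.sub measurable_id)).mul ham
    have hrpow0 : (0:ℝ) ≤ (2*r) ^ (-(1/q)) := Real.rpow_nonneg (by positivity) _
    have hFb : ∀ t, |F t| ≤ M₀ * (2*r) ^ (-(1/q)) := by
      intro t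
      rcases eq_or_ne (a t) 0 with h0 | h0
      · simp only [hFd, h0, mul_zero, abs_zero]; positivity
      · have hts := hasupp t h0
        rw [hFd, abs_mul]
        exact mul_le_mul (hM₀b _ (hmemJ t hts)) (habd t) (abs_nonneg _) hM₀0
    have hFint : ∀ a₁ b₁ : ℝ, IntervalIntegrable F volume a₁ b₁ :=
      fun a₁ b₁ => II_of_bounded hFm hFb a₁ b₁
    have hzero_left : ∫ t in A'..A, F t = 0 := by
      have hae : ∀ᵐ t : ℝ ∂volume, t ∈ Set.uIoc A' A → F t = 0 := by
        have hsing : ∀ᵐ t : ℝ ∂volume, t ≠ A := by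
          rw [MeasureTheory.ae_iff]
          simp only [Ne, not_not, Set.setOf_eq_eq_singleton]
          exact measure_singleton (A : ℝ)
        filter_upwards [hsing] with t htA hmem
        rw [Set.uIoc_of_le hA'A] at hmem
        have htlt : t < A := lt_of_le_of_ne hmem.2 htA
        have ha0 : a t = 0 := by
          by_contra h
          have h2 := hasupp t h
          rw [abs_le] at h2
          simp only [hA] at htlt; linarith [h2.1]
        simp [hFd, ha0]
      calc ∫ t in A'..A, F t = ∫ _t in A'..A, (0:ℝ) := intervalIntegral.integral_congr_ae hae
        _ = 0 := intervalIntegral.integral_zero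
    have hzero_right : ∫ t in B..B', F t = 0 := by
      have hae : ∀ᵐ t : ℝ ∂volume, t ∈ Set.uIoc B B' → F t = 0 := by
        refine Filter.Eventually.of_forall fun t hmem => ?_
        rw [Set.uIoc_of_le hBB'] at hmem
        have ha0 : a t = 0 := by
          by_contra h
          have h2 := hasupp t h
          rw [abs_le] at h2
          have := hmem.1
          simp only [hB] at this; linarith [h2.2]
        simp [hFd, ha0]
      calc ∫ t in B..B', F t = ∫ _t in B..B', (0:ℝ) := intervalIntegral.integral_congr_ae hae
        _ = 0 := intervalIntegral.integral_zero
    have hsplit : ∫ t in A'..B', F t = ∫ t in A..B, F t := by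
      have h12 := intervalIntegral.integral_add_adjacent_intervals (hFint A' A) (hFint A B)
      have h123 := intervalIntegral.integral_add_adjacent_intervals
        ((hFint A' A).trans (hFint A B)) (hFint B B')
      rw [← h123, ← h12, hzero_left, hzero_right]
      ring
    -- main estimate
    have haPint : IntervalIntegrable (fun t => a t * P t) volume A B :=
      haInt.mul_continuousOn hPcont.continuousOn
    have hdiff_int : IntervalIntegrable (fun t => (f t - P t) * a t) volume A B := by
      have heq : (fun t => (f t - P t) * a t) = fun t => F t - a t * P t := by
        funext t; simp only [hFd, hf]; ring
      rw [heq]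
      exact (hFint A B).sub haPint
    have hmain : ∫ t in A..B, F t = ∫ t in A..B, (f t - P t) * a t := by
      have heq : F = fun t => (f t - P t) * a t + a t * P t := by
        funext t; simp only [hFd, hf]; ring
      rw [heq, intervalIntegral.integral_add hdiff_int haPint, hPzero, add_zero]
    have hbound : |∫ t in A..B, (f t - P t) * a t| ≤
        (M * u ^ (N+1) / (N.factorial : ℝ) * ((2*r) ^ (-(1/q)))) * |B - A| := by
      rw [← Real.norm_eq_abs]
      apply intervalIntegral.norm_integral_le_of_norm_le_const
      intro t ht
      rw [Set.uIoc_of_le hAB.le] at ht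
      have ht' : t ∈ Set.Icc A B := ⟨ht.1.le, ht.2⟩
      rw [Real.norm_eq_abs, abs_mul]
      exact mul_le_mul (htay t ht') (habd t) (abs_nonneg _) (by positivity)
    have hBA : |B - A| = u := by
      rw [abs_of_nonneg (by linarith)]
      simp only [hB, hA, hu]; ring
    -- numerical estimate
    have hfinal : (M * u ^ (N+1) / (N.factorial : ℝ) * ((2*r) ^ (-(1/q)))) * u ≤
        (M + 1) * 2 ^ (N + 2) / (N.factorial : ℝ) := by
      have hur : (2 * r : ℝ) = u := by rw [hu]
      have hDu : (M * u ^ (N+1) / (N.factorial : ℝ) * ((2*r) ^ (-(1/q)))) * u =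
          M / (N.factorial : ℝ) * (u ^ (((N+1:ℕ)):ℝ) * u ^ (-(1/q)) * u ^ (1:ℝ)) := by
        rw [Real.rpow_natCast, Real.rpow_one, hur]
        ring
      rw [hDu]
      have hcomb : u ^ (((N+1:ℕ)):ℝ) * u ^ (-(1/q)) * u ^ (1:ℝ) =
          u ^ ((((N+1:ℕ)):ℝ) + (-(1/q)) + 1) := by
        rw [← Real.rpow_add hu0, ← Real.rpow_add hu0]
      rw [hcomb]
      have hNm : ((N:ℝ) + 1) = (m:ℝ) := by exact_mod_cast congrArg (Nat.cast (R := ℝ)) hN1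
      have he0 : 0 ≤ (((N+1:ℕ)):ℝ) + (-(1/q)) + 1 := by push_cast; linarith [hmlt]
      have heN : (((N+1:ℕ)):ℝ) + (-(1/q)) + 1 ≤ (((N+2:ℕ)):ℝ) := by
        have h1q : 0 < 1/q := by positivity
        push_cast; linarith
      have hue : u ^ ((((N+1:ℕ)):ℝ) + (-(1/q)) + 1) ≤ (2:ℝ) ^ (N+2) := by
        calc u ^ ((((N+1:ℕ)):ℝ) + (-(1/q)) + 1) ≤ (2:ℝ) ^ ((((N+1:ℕ)):ℝ) + (-(1/q)) + 1) :=
              Real.rpow_le_rpow hu0.le hu2 he0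
          _ ≤ (2:ℝ) ^ (((N+2:ℕ)):ℝ) := Real.rpow_le_rpow_of_exponent_le one_le_two heN
          _ = (2:ℝ) ^ (N+2) := Real.rpow_natCast 2 (N+2)
      calc M / (N.factorial : ℝ) * (u ^ ((((N+1:ℕ)):ℝ) + (-(1/q)) + 1)) ≤
            M / (N.factorial : ℝ) * ((2:ℝ) ^ (N+2)) := by
              apply mul_le_mul_of_nonneg_left hue (by positivity)
        _ ≤ (M + 1) * 2 ^ (N + 2) / (N.factorial : ℝ) := by
              rw [div_mul_eq_mul_div]
              gcongr
              linarith
    calc |∫ t in A'..B', F t| = |∫ t in A..B, (f t - P t) * a t| := by rw [hsplit, hmain]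
      _ ≤ (M * u ^ (N+1) / (N.factorial : ℝ) * ((2*r) ^ (-(1/q)))) * |B - A| := hbound
      _ = (M * u ^ (N+1) / (N.factorial : ℝ) * ((2*r) ^ (-(1/q)))) * u := by rw [hBA]
      _ ≤ (M + 1) * 2 ^ (N + 2) / (N.factorial : ℝ) := hfinal
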